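/- For a cause-respecting RPES E: (i) for every configuration last(t) ∈ Conf(E), the residual E \ t belongs to Reach(E); and (ii) for every E' ∈ Reach(E), there exists a trace t with last(t) ∈ Conf(E) such that E' = E \ t. -/

import Mathlib

/-- Data of a (labeled) reversible prime event structure (RPES) over actions `L`:
a carrier set of events, causality `lt`, conflict `conf`, labeling, a set `F` of
reversible events, reverse causality `rc` (`rc e u` means `e ≺ u̲`), prevention
`prev` (`prev e u` means `e ▷ u̲`), and an initial configuration `C0`. -/
structure RPESData (E : Type) (L : Type) where
  carrier : Set E
  lt : E → E → Prop
  conf : E → E → Prop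
  label : E → L
  F : Set E
  rc : E → E → Prop
  prev : E → E → Prop
  C0 : Set E

/-- Data of a (labeled) prime event structure (PES) with empty initial configuration. -/
structure PESData (E : Type) (L : Type) where
  carrier : Set E
  lt : E → E → Prop
  conf : E → E → Prop
  label : E → L

namespace RPESData

variable {E : Type} {L : Type}

/-- A set of events is conflict-free. -/
def ConflictFree (R : RPESData E L) (X : Set E) : Prop :=
  ∀ e ∈ X, ∀ e' ∈ X, ¬ R.conf e e'

/-- Sustained causation: `a ≪ b` iff `a < b` and, if `a` is reversible, `b ▷ a̲`. -/
def SC (R : RPESData E L) (a b : E) : Prop :=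
  R.lt a b ∧ (a ∈ R.F → R.prev b a)

/-- The axioms of a reversible prime event structure. -/
structure IsRPES (R : RPESData E L) : Prop where
  countable : R.carrier.Countable
  lt_carrier : ∀ a b, R.lt a b → a ∈ R.carrier ∧ b ∈ R.carrier
  conf_carrier : ∀ a b, R.conf a b → a ∈ R.carrier ∧ b ∈ R.carrier
  conf_irrefl : ∀ a, ¬ R.conf a a
  conf_symm : ∀ a b, R.conf a b → R.conf b a
  lt_irrefl : ∀ a, ¬ R.lt a a
  lt_trans : ∀ a b c, R.lt a b → R.lt b c → R.lt a c
  causes_finite : ∀ e, {e' | R.lt e' e}.Finite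
  causes_cf : ∀ e, R.ConflictFree {e' | R.lt e' e}
  F_carrier : R.F ⊆ R.carrier
  rc_carrier : ∀ a b, R.rc a b → a ∈ R.carrier ∧ b ∈ R.F
  rc_refl : ∀ u ∈ R.F, R.rc u u
  rcauses_finite : ∀ u ∈ R.F, {e | R.rc e u}.Finite
  rcauses_cf : ∀ u ∈ R.F, R.ConflictFree {e | R.rc e u}
  prev_carrier : ∀ a b, R.prev a b → a ∈ R.carrier ∧ b ∈ R.F
  prev_rc_disjoint : ∀ a b, ¬ (R.prev a b ∧ R.rc a b)
  sc_trans : ∀ a b c, R.SC a b → R.SC b c → R.SC a c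
  conf_hered_sc : ∀ a b c, R.conf a b → R.SC b c → R.conf a c
  C0_carrier : R.C0 ⊆ R.carrier
  C0_finite : R.C0.Finite
  C0_closed : ∀ e ∈ R.C0, ∀ e', R.lt e' e → e' ∈ R.C0
  C0_cf : R.ConflictFree R.C0

/-- A cause-respecting RPES: causality is sustained causation. -/
def CauseRespecting (R : RPESData E L) : Prop :=
  ∀ a b, R.lt a b → R.SC a b

/-- A causal RPES. -/
def Causal (R : RPESData E L) : Prop :=
  (∀ e, ∀ u ∈ R.F, (R.rc e u ↔ e = u)) ∧
  (∀ e, ∀ u ∈ R.F, (R.prev e u ↔ R.lt u e))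

/-- The mixed step `A ∪ B̲` is enabled at configuration `C`. -/
def Enabled (R : RPESData E L) (C A B : Set E) : Prop :=
  A.Finite ∧ B.Finite ∧ A ⊆ R.carrier ∧ B ⊆ R.F ∧
  A ∩ C = ∅ ∧ B ⊆ C ∧ R.ConflictFree (C ∪ A) ∧
  (∀ e ∈ A, ∀ e', R.lt e' e → e' ∈ C \ B) ∧
  (∀ e ∈ B, ∀ e', R.rc e' e → e' ∈ C \ (B \ {e})) ∧
  (∀ e ∈ B, ∀ e', R.prev e' e → e' ∉ C ∪ A)

/-- `IsTraceFrom R C t C'`: the sequence of mixed steps `t` can be executed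
starting at `C`, ending in `C'`. -/
def IsTraceFrom (R : RPESData E L) : Set E → List (Set E × Set E) → Set E → Prop
  | C, [], C' => C' = C
  | C, p :: t, C' => R.Enabled C p.1 p.2 ∧ R.IsTraceFrom ((C \ p.2) ∪ p.1) t C'

/-- `t` is a trace of `R` with `last(t) = C`. -/
def IsTraceTo (R : RPESData E L) (t : List (Set E × Set E)) (C : Set E) : Prop :=
  R.IsTraceFrom R.C0 t C

/-- `t` is a trace of `R`. -/
def IsTrace (R : RPESData E L) (t : List (Set E × Set E)) : Prop :=
  ∃ C, R.IsTraceTo t C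

/-- Reachable configurations: obtained from `C0` by mixed steps. -/
inductive ReachConf (R : RPESData E L) : Set E → Prop
  | init : ReachConf R R.C0
  | step : ∀ C A B, ReachConf R C → R.Enabled C A B → ReachConf R ((C \ B) ∪ A)

/-- Forwards reachable configurations: obtained from `C0` by forward steps only. -/
inductive FwdReachConf (R : RPESData E L) : Set E → Prop
  | init : FwdReachConf R R.C0
  | step : ∀ C A, FwdReachConf R C → R.Enabled C A ∅ → FwdReachConf R ((C \ ∅) ∪ A)

/-- The one-step removal operator: the residual of `R` after the step `A ∪ B̲`. -/
def residStep (R : RPESData E L) (A B : Set E) : RPESData E L :=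
  let At : Set E := (A \ R.F) ∪ {a | a ∈ R.F ∧ ∃ x ∈ A \ R.F, R.lt a x}
  let CA : Set E := {e | e ∈ R.carrier ∧ ∃ a ∈ At, R.conf e a}
  let E' : Set E := R.carrier \ (At ∪ CA)
  let F' : Set E := (R.F ∩ E') \
    ({e | e ∈ R.F ∧ ∃ a ∈ CA, R.rc a e} ∪ {e | e ∈ R.F ∧ ∃ a ∈ At, R.prev a e})
  { carrier := E'
    lt := fun a b => R.lt a b ∧ a ∈ E' ∧ b ∈ E'
    conf := fun a b => R.conf a b ∧ a ∈ E' ∧ b ∈ E'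
    label := R.label
    F := F'
    rc := fun a b => R.rc a b ∧ a ∈ E' ∧ b ∈ F'
    prev := fun a b => R.prev a b ∧ a ∈ E' ∧ b ∈ F'
    C0 := ((R.C0 \ B) ∪ A) ∩ E' }

/-- The residual `R \ t` of `R` after a trace `t`. -/
def resid (R : RPESData E L) (t : List (Set E × Set E)) : RPESData E L :=
  t.foldl (fun S p => S.residStep p.1 p.2) R

/-- The multiset (as a function `L → ℕ`) of action labels of the step `A ∪ B̲`. -/
noncomputable def stepLabel (R : RPESData E L) (A B : Set E) : L → ℕ :=
  fun a => Nat.card {e : E // e ∈ A ∪ B ∧ R.label e = a}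

/-- Forgetting the reversibility structure. -/
def toPES (R : RPESData E L) : PESData E L :=
  ⟨R.carrier, R.lt, R.conf, R.label⟩

end RPESData

namespace PESData

variable {E : Type} {L : Type}

/-- The axioms of a prime event structure. -/
structure IsPES (P : PESData E L) : Prop where
  countable : P.carrier.Countable
  lt_carrier : ∀ a b, P.lt a b → a ∈ P.carrier ∧ b ∈ P.carrier
  conf_carrier : ∀ a b, P.conf a b → a ∈ P.carrier ∧ b ∈ P.carrier
  lt_irrefl : ∀ a, ¬ P.lt a a
  lt_trans : ∀ a b c, P.lt a b → P.lt b c → P.lt a c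
  causes_finite : ∀ e, {e' | P.lt e' e}.Finite
  conf_irrefl : ∀ a, ¬ P.conf a a
  conf_symm : ∀ a b, P.conf a b → P.conf b a
  conf_hered : ∀ a b c, P.conf a b → P.lt b c → P.conf a c

/-- `φ(E, F)`: the RPES obtained from a PES by declaring the events in `F`
reversible, with `e ≺ e̲` for `e ∈ F` and `e ▷ e̲'` whenever `e' ∈ F`, `e' < e`. -/
def toRPES (P : PESData E L) (F : Set E) : RPESData E L :=
  { carrier := P.carrier
    lt := P.lt
    conf := P.conf
    label := P.label
    F := F
    rc := fun e u => u ∈ F ∧ e = u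
    prev := fun e u => u ∈ F ∧ P.lt u e
    C0 := ∅ }

end PESData

/-- A labeled transition system. -/
structure LTS (S : Type) (Λ : Type) where
  tr : S → Λ → S → Prop
  init : S

/-- Bisimulation between labeled transition systems. -/
def IsBisimulation {S S' Λ : Type} (T : LTS S Λ) (T' : LTS S' Λ)
    (Rl : S → S' → Prop) : Prop :=
  Rl T.init T'.init ∧
  (∀ s s', Rl s s' → ∀ M s₁, T.tr s M s₁ → ∃ s₁', T'.tr s' M s₁' ∧ Rl s₁ s₁') ∧
  (∀ s s', Rl s s' → ∀ M s₁', T'.tr s' M s₁' → ∃ s₁, T.tr s M s₁ ∧ Rl s₁ s₁')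

namespace RPESData

variable {E : Type} {L : Type}

/-- Transition relation of the configuration transition system `TC(R)`. -/
def confTr (R : RPESData E L) (C : Set E) (M : L → ℕ) (C' : Set E) : Prop :=
  R.ReachConf C ∧ ∃ A B, R.Enabled C A B ∧ C' = (C \ B) ∪ A ∧ M = R.stepLabel A B

/-- The configuration transition system `TC(R)`. -/
def TC (R : RPESData E L) : LTS (Set E) (L → ℕ) :=
  ⟨R.confTr, R.C0⟩

/-- Transition relation between residuals: `F ⇀^M F'` iff `F' = F \ (A ∪ B̲)` for
a one-step trace `A ∪ B̲` of `F` with label multiset `M`. -/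
def residTr (R' : RPESData E L) (M : L → ℕ) (R'' : RPESData E L) : Prop :=
  ∃ A B, R'.Enabled R'.C0 A B ∧ R'' = R'.residStep A B ∧ M = R'.stepLabel A B

/-- Residuals reachable from `R` via `residTr`. -/
inductive ReachRes (R : RPESData E L) : RPESData E L → Prop
  | init : ReachRes R R
  | step : ∀ R' M R'', ReachRes R R' → residTr R' M R'' → ReachRes R R''

/-- The residual transition system `TE(R)`. -/
def TE (R : RPESData E L) : LTS (RPESData E L) (L → ℕ) :=
  ⟨residTr, R⟩

end RPESData

/-! Along a trace, the residual `R \ t` is determined by the configuration `C = last t`: it is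
the restriction of `R` to the events still available, its initial configuration is what is
left of `C`, and every removed event is accounted for by `C`. Removed events of `C` have become
permanent (irreversible events of a step and their reversible causes, which they prevent from
being undone); removed events outside `C` are in conflict with such a permanent event; and a
reversible event stops being reversible when it is removed, permanently prevented, or one of its
reverse causes is discarded. Under this invariant a step `A ∪ B̲` is enabled at `C` in `R` exactly
when it is enabled at the initial configuration of the residual, and cause-respect (`a < b`
implies `a ≪ b`, along which conflict is inherited) makes the invariant survive one more removal
step. Both parts then follow by induction, on the trace and on the derivation of
`R' ∈ Reach(R)` respectively. -/

lemma Set.mem_diff_union_of_mem {E : Type} {A B C X : Set E} {x : E} (hB : B ⊆ X)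
    (hxC : x ∈ C) (hxX : x ∉ X) : x ∈ (C \ B) ∪ A :=
  Or.inl ⟨hxC, fun hxB => hxX (hB hxB)⟩

lemma Set.notMem_diff_union_of_notMem {E : Type} {A B C X : Set E} {x : E} (hA : A ⊆ X)
    (hxC : x ∉ C) (hxX : x ∉ X) : x ∉ (C \ B) ∪ A := by
  rintro (⟨hxC', -⟩ | hxA)
  exacts [hxC hxC', hxX (hA hxA)]

namespace RPESData

variable {E L : Type} {R R' : RPESData E L} {A B C : Set E}

lemma ConflictFree.mono {X Y : Set E} (hY : R.ConflictFree Y) (hXY : X ⊆ Y) :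
    R.ConflictFree X :=
  fun e he e' he' => hY e (hXY he) e' (hXY he')

/-! The sets `At`, `CA`, `E'` and `F'` of `residStep`. -/

def permanentEvents (R : RPESData E L) (A : Set E) : Set E :=
  (A \ R.F) ∪ {a | a ∈ R.F ∧ ∃ x ∈ A \ R.F, R.lt a x}

def discardedEvents (R : RPESData E L) (A : Set E) : Set E :=
  {e | e ∈ R.carrier ∧ ∃ a ∈ R.permanentEvents A, R.conf e a}

def residCarrier (R : RPESData E L) (A : Set E) : Set E :=
  R.carrier \ (R.permanentEvents A ∪ R.discardedEvents A)

def residF (R : RPESData E L) (A : Set E) : Set E :=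
  (R.F ∩ R.residCarrier A) \
    ({e | e ∈ R.F ∧ ∃ a ∈ R.discardedEvents A, R.rc a e} ∪
      {e | e ∈ R.F ∧ ∃ a ∈ R.permanentEvents A, R.prev a e})

lemma residStep_carrier (R : RPESData E L) (A B : Set E) :
    (R.residStep A B).carrier = R.residCarrier A := rfl

lemma residStep_C0 (R : RPESData E L) (A B : Set E) :
    (R.residStep A B).C0 = ((R.C0 \ B) ∪ A) ∩ R.residCarrier A := rfl

lemma mem_permanentEvents_or_discardedEvents {e : E} (he : e ∈ R.carrier)
    (hne : e ∉ R.residCarrier A) : e ∈ R.permanentEvents A ∪ R.discardedEvents A := by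
  by_contra h
  exact hne ⟨he, h⟩

lemma Enabled.permanentEvents_subset (hE : R.Enabled C A B) :
    R.permanentEvents A ⊆ (C \ B) ∪ A := by
  obtain ⟨-, -, -, -, -, -, -, hlt, -⟩ := hE
  rintro x (⟨hxA, -⟩ | ⟨-, y, hy, hxy⟩)
  exacts [Or.inr hxA, Or.inl (hlt y hy.1 x hxy)]

lemma Enabled.notMem_of_mem_discardedEvents (hE : R.Enabled C A B) {e : E}
    (he : e ∈ R.discardedEvents A) : e ∉ C ∪ A := by
  obtain ⟨a, ha, hea⟩ := he.2
  intro heCA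
  have haCA : a ∈ C ∪ A :=
    Set.union_subset_union_left A Set.sdiff_subset (hE.permanentEvents_subset ha)
  obtain ⟨-, -, -, -, -, -, hcf, -⟩ := hE
  exact hcf e heCA a haCA hea

structure IsRestriction (R R' : RPESData E L) : Prop where
  carrier_subset : R'.carrier ⊆ R.carrier
  lt_iff : ∀ a b, R'.lt a b ↔ R.lt a b ∧ a ∈ R'.carrier ∧ b ∈ R'.carrier
  conf_iff : ∀ a b, R'.conf a b ↔ R.conf a b ∧ a ∈ R'.carrier ∧ b ∈ R'.carrier
  F_subset : R'.F ⊆ R.F ∩ R'.carrier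
  rc_iff : ∀ a b, R'.rc a b ↔ R.rc a b ∧ a ∈ R'.carrier ∧ b ∈ R'.F
  prev_iff : ∀ a b, R'.prev a b ↔ R.prev a b ∧ a ∈ R'.carrier ∧ b ∈ R'.F

lemma IsRPES.isRestriction_refl (h : R.IsRPES) : R.IsRestriction R where
  carrier_subset := subset_rfl
  lt_iff a b := ⟨fun hab => ⟨hab, h.lt_carrier a b hab⟩, And.left⟩
  conf_iff a b := ⟨fun hab => ⟨hab, h.conf_carrier a b hab⟩, And.left⟩
  F_subset _ hu := ⟨hu, h.F_carrier hu⟩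
  rc_iff a b := ⟨fun hab => ⟨hab, h.rc_carrier a b hab⟩, And.left⟩
  prev_iff a b := ⟨fun hab => ⟨hab, h.prev_carrier a b hab⟩, And.left⟩

lemma isRestriction_residStep (R : RPESData E L) (A B : Set E) :
    R.IsRestriction (R.residStep A B) where
  carrier_subset := Set.sdiff_subset
  lt_iff _ _ := Iff.rfl
  conf_iff _ _ := Iff.rfl
  F_subset := Set.sdiff_subset
  rc_iff _ _ := Iff.rfl
  prev_iff _ _ := Iff.rfl

lemma IsRestriction.trans {R'' : RPESData E L} (h₁ : R.IsRestriction R')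
    (h₂ : R'.IsRestriction R'') : R.IsRestriction R'' where
  carrier_subset := h₂.carrier_subset.trans h₁.carrier_subset
  lt_iff a b := by
    have := @h₂.carrier_subset a
    have := @h₂.carrier_subset b
    rw [h₂.lt_iff, h₁.lt_iff]
    tauto
  conf_iff a b := by
    have := @h₂.carrier_subset a
    have := @h₂.carrier_subset b
    rw [h₂.conf_iff, h₁.conf_iff]
    tauto
  F_subset u hu := ⟨(h₁.F_subset (h₂.F_subset hu).1).1, (h₂.F_subset hu).2⟩
  rc_iff a b := by
    have := @h₂.carrier_subset a
    have := fun hb => (h₂.F_subset (a := b) hb).1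
    rw [h₂.rc_iff, h₁.rc_iff]
    tauto
  prev_iff a b := by
    have := @h₂.carrier_subset a
    have := fun hb => (h₂.F_subset (a := b) hb).1
    rw [h₂.prev_iff, h₁.prev_iff]
    tauto

/-- The invariant relating a configuration `C` of `R` to the residual `R'` of `R` along a trace
reaching `C`. -/
structure IsResidualAt (R : RPESData E L) (C : Set E) (R' : RPESData E L) : Prop
    extends R.IsRestriction R' where
  C0_eq : R'.C0 = C ∩ R'.carrier
  subset_carrier : C ⊆ R.carrier
  conflictFree : R.ConflictFree C
  removed_of_mem : ∀ e, e ∉ R'.carrier → e ∈ C →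
      (∀ y ∈ R'.carrier, ¬ R.conf e y) ∧ (∀ u ∈ R'.F, ¬ R.prev e u)
  removed_of_not_mem : ∀ e ∈ R.carrier, e ∉ R'.carrier → e ∉ C →
      (∃ c ∈ C, R.conf e c ∧ c ∉ R'.carrier) ∧
        (∀ b ∈ R'.carrier, ¬ R.lt e b) ∧ (∀ u ∈ R'.F, ¬ R.rc e u)
  F_removed : ∀ u ∈ R.F, u ∉ R'.F →
      (u ∉ C ∧ u ∉ R'.carrier) ∨ (∃ x ∈ C, R.prev x u ∧ x ∉ R'.carrier) ∨
        (∃ a, R.rc a u ∧ a ∉ C ∧ a ∉ R'.carrier)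

lemma IsRPES.isResidualAt_C0 (h : R.IsRPES) : R.IsResidualAt R.C0 R where
  toIsRestriction := h.isRestriction_refl
  C0_eq := (Set.inter_eq_left.mpr h.C0_carrier).symm
  subset_carrier := h.C0_carrier
  conflictFree := h.C0_cf
  removed_of_mem _ he heC := (he (h.C0_carrier heC)).elim
  removed_of_not_mem _ he hne _ := (hne he).elim
  F_removed _ hu hnu := (hnu hu).elim

namespace IsResidualAt

lemma mem_C0 (hI : R.IsResidualAt C R') {x : E} : x ∈ R'.C0 ↔ x ∈ C ∧ x ∈ R'.carrier := by
  rw [hI.C0_eq, Set.mem_inter_iff]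

lemma C0_subset (hI : R.IsResidualAt C R') : R'.C0 ⊆ C :=
  fun _ hx => (hI.mem_C0.mp hx).1

lemma subset_carrier_of_enabled (hI : R.IsResidualAt C R') (hE : R.Enabled C A B) :
    A ⊆ R'.carrier := by
  obtain ⟨-, -, hAcar, -, hAC, -, hcf, -⟩ := hE
  intro a ha
  by_contra hna
  have haC : a ∉ C := fun haC => hAC.subset ⟨ha, haC⟩
  obtain ⟨⟨c, hcC, hac, -⟩, -⟩ := hI.removed_of_not_mem a (hAcar ha) hna haC
  exact hcf a (Or.inr ha) c (Or.inl hcC) hac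

lemma subset_F_of_enabled (hI : R.IsResidualAt C R') (hE : R.Enabled C A B) : B ⊆ R'.F := by
  obtain ⟨-, -, -, hBF, -, hBC, -, -, hrc, hprev⟩ := hE
  intro u hu
  by_contra hnu
  rcases hI.F_removed u (hBF hu) hnu with ⟨huC, -⟩ | ⟨x, hxC, hxu, -⟩ | ⟨a, hau, haC, -⟩
  · exact huC (hBC hu)
  · exact hprev u hu x hxu (Or.inl hxC)
  · exact haC (hrc u hu a hau).1

lemma enabled_residual (hI : R.IsResidualAt C R') (hE : R.Enabled C A B) :
    R'.Enabled R'.C0 A B := by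
  have hA := hI.subset_carrier_of_enabled hE
  have hB := hI.subset_F_of_enabled hE
  obtain ⟨hAfin, hBfin, -, -, hAC, hBC, hcf, hlt, hrc, hprev⟩ := hE
  have hC0A : R'.C0 ∪ A ⊆ C ∪ A := Set.union_subset_union_left A hI.C0_subset
  refine ⟨hAfin, hBfin, hA, hB, Set.subset_eq_empty (Set.inter_subset_inter_right A hI.C0_subset) hAC,
    fun u hu => hI.mem_C0.mpr ⟨hBC hu, (hI.F_subset (hB hu)).2⟩,
    fun e he e' he' hee' => hcf e (hC0A he) e' (hC0A he') ((hI.conf_iff e e').mp hee').1,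
    ?_, ?_, fun e he e' he'e he'C0A => hprev e he e' ((hI.prev_iff e' e).mp he'e).1 (hC0A he'C0A)⟩
  · intro e he e' he'e
    obtain ⟨he'e, he', -⟩ := (hI.lt_iff e' e).mp he'e
    obtain ⟨he'C, he'B⟩ := hlt e he e' he'e
    exact ⟨hI.mem_C0.mpr ⟨he'C, he'⟩, he'B⟩
  · intro e he e' he'e
    obtain ⟨he'e, he', -⟩ := (hI.rc_iff e' e).mp he'e
    obtain ⟨he'C, he'B⟩ := hrc e he e' he'e
    exact ⟨hI.mem_C0.mpr ⟨he'C, he'⟩, he'B⟩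

lemma conflictFree_union (h : R.IsRPES) (hI : R.IsResidualAt C R') (hA : A ⊆ R'.carrier)
    (hcf : R'.ConflictFree (R'.C0 ∪ A)) : R.ConflictFree (C ∪ A) := by
  have hmem : ∀ x ∈ C ∪ A, x ∈ R'.carrier → x ∈ R'.C0 ∪ A := by
    rintro x (hxC | hxA) hx
    exacts [Or.inl (hI.mem_C0.mpr ⟨hxC, hx⟩), Or.inr hxA]
  have hC : ∀ x ∈ C ∪ A, x ∉ R'.carrier → x ∈ C :=
    fun x hxCA hx => hxCA.resolve_right fun hxA => hx (hA hxA)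
  intro e he e' he' hee'
  by_cases hec : e ∈ R'.carrier <;> by_cases he'c : e' ∈ R'.carrier
  · exact hcf e (hmem e he hec) e' (hmem e' he' he'c) ((hI.conf_iff e e').mpr ⟨hee', hec, he'c⟩)
  · exact (hI.removed_of_mem e' he'c (hC e' he' he'c)).1 e hec (h.conf_symm e e' hee')
  · exact (hI.removed_of_mem e hec (hC e he hec)).1 e' he'c hee'
  · exact hI.conflictFree e (hC e he hec) e' (hC e' he' he'c) hee'

lemma enabled_of_enabled_residual (h : R.IsRPES) (hI : R.IsResidualAt C R')
    (hE : R'.Enabled R'.C0 A B) : R.Enabled C A B := by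
  obtain ⟨hAfin, hBfin, hA, hB, hAC0, hBC0, hcf, hlt, hrc, hprev⟩ := hE
  have hBc : B ⊆ R'.carrier := fun u hu => (hI.F_subset (hB hu)).2
  refine ⟨hAfin, hBfin, hA.trans hI.carrier_subset, fun u hu => (hI.F_subset (hB hu)).1,
    Set.eq_empty_of_forall_notMem fun x hx => hAC0.subset ⟨hx.1, hI.mem_C0.mpr ⟨hx.2, hA hx.1⟩⟩,
    fun u hu => (hI.mem_C0.mp (hBC0 hu)).1, hI.conflictFree_union h hA hcf, ?_, ?_, ?_⟩
  · intro e he e' he'e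
    by_cases he' : e' ∈ R'.carrier
    · obtain ⟨he'C0, he'B⟩ := hlt e he e' ((hI.lt_iff e' e).mpr ⟨he'e, he', hA he⟩)
      exact ⟨(hI.mem_C0.mp he'C0).1, he'B⟩
    · by_cases he'C : e' ∈ C
      · exact ⟨he'C, fun he'B => he' (hBc he'B)⟩
      · exact absurd he'e
          ((hI.removed_of_not_mem e' (h.lt_carrier e' e he'e).1 he' he'C).2.1 e (hA he))
  · intro e he e' he'e
    by_cases he' : e' ∈ R'.carrier
    · obtain ⟨he'C0, he'B⟩ := hrc e he e' ((hI.rc_iff e' e).mpr ⟨he'e, he', hB he⟩)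
      exact ⟨(hI.mem_C0.mp he'C0).1, he'B⟩
    · by_cases he'C : e' ∈ C
      · exact ⟨he'C, fun he'B => he' (hBc he'B.1)⟩
      · exact absurd he'e
          ((hI.removed_of_not_mem e' (h.rc_carrier e' e he'e).1 he' he'C).2.2 e (hB he))
  · intro e he e' he'e he'CA
    by_cases he' : e' ∈ R'.carrier
    · refine hprev e he e' ((hI.prev_iff e' e).mpr ⟨he'e, he', hB he⟩) ?_
      rcases he'CA with he'C | he'A
      exacts [Or.inl (hI.mem_C0.mpr ⟨he'C, he'⟩), Or.inr he'A]
    · rcases he'CA with he'C | he'A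
      exacts [(hI.removed_of_mem e' he' he'C).2 e (hB he) he'e, he' (hA he'A)]

lemma enabled_iff (h : R.IsRPES) (hI : R.IsResidualAt C R') :
    R.Enabled C A B ↔ R'.Enabled R'.C0 A B :=
  ⟨hI.enabled_residual, hI.enabled_of_enabled_residual h⟩

lemma permanentEvents_subset (hI : R.IsResidualAt C R') (hE' : R'.Enabled R'.C0 A B) :
    R'.permanentEvents A ⊆ (C \ B) ∪ A :=
  hE'.permanentEvents_subset.trans
    (Set.union_subset_union_left A (Set.sdiff_subset_sdiff_left hI.C0_subset))

lemma notMem_of_mem_discardedEvents (hI : R.IsResidualAt C R') (hE' : R'.Enabled R'.C0 A B)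
    {e : E} (he : e ∈ R'.discardedEvents A) : e ∉ (C \ B) ∪ A := by
  rintro (⟨heC, -⟩ | heA)
  · exact hE'.notMem_of_mem_discardedEvents he (Or.inl (hI.mem_C0.mpr ⟨heC, he.1⟩))
  · exact hE'.notMem_of_mem_discardedEvents he (Or.inr heA)

lemma residStep_removed_of_mem (h : R.IsRPES) (hI : R.IsResidualAt C R')
    (hE' : R'.Enabled R'.C0 A B) (e : E) (hne : e ∉ R'.residCarrier A) (he : e ∈ (C \ B) ∪ A) :
    (∀ y ∈ R'.residCarrier A, ¬ R.conf e y) ∧ (∀ u ∈ R'.residF A, ¬ R.prev e u) := by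
  by_cases hec : e ∈ R'.carrier
  · rcases mem_permanentEvents_or_discardedEvents hec hne with hp | hd
    · refine ⟨fun y hy hey => hy.2 (Or.inr ⟨hy.1, e, hp, ?_⟩),
        fun u hu heu => hu.2 (Or.inr ⟨hu.1.1, e, hp, (hI.prev_iff e u).mpr ⟨heu, hec, hu.1.1⟩⟩)⟩
      exact (hI.conf_iff y e).mpr ⟨h.conf_symm e y hey, hy.1, hec⟩
    · exact absurd he (hI.notMem_of_mem_discardedEvents hE' hd)
  · have heC : e ∈ C := by
      by_contra heC
      exact Set.notMem_diff_union_of_notMem hE'.2.2.1 heC hec he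
    obtain ⟨hconf, hprev⟩ := hI.removed_of_mem e hec heC
    exact ⟨fun y hy => hconf y hy.1, fun u hu => hprev u hu.1.1⟩

lemma residStep_removed_of_not_mem (h : R.IsRPES) (hcr : R.CauseRespecting)
    (hI : R.IsResidualAt C R') (hE' : R'.Enabled R'.C0 A B) (e : E) (he : e ∈ R.carrier)
    (hne : e ∉ R'.residCarrier A) (heC : e ∉ (C \ B) ∪ A) :
    (∃ c ∈ (C \ B) ∪ A, R.conf e c ∧ c ∉ R'.residCarrier A) ∧
      (∀ b ∈ R'.residCarrier A, ¬ R.lt e b) ∧ (∀ u ∈ R'.residF A, ¬ R.rc e u) := by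
  have hBc : B ⊆ R'.carrier := fun u hu => (hI.F_subset (hE'.2.2.2.1 hu)).2
  by_cases hec : e ∈ R'.carrier
  · rcases mem_permanentEvents_or_discardedEvents hec hne with hp | hd
    · exact absurd (hI.permanentEvents_subset hE' hp) heC
    obtain ⟨a, ha, hea'⟩ := hd.2
    obtain ⟨hea, -, hac⟩ := (hI.conf_iff e a).mp hea'
    refine ⟨⟨a, hI.permanentEvents_subset hE' ha, hea, fun hac' => hac'.2 (Or.inl ha)⟩, ?_,
      fun u hu heu => hu.2 (Or.inl ⟨hu.1.1, e, hd, (hI.rc_iff e u).mpr ⟨heu, hec, hu.1.1⟩⟩)⟩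
    intro b hb heb
    -- by cause-respect `e ≪ b`, so `b` inherits the conflict of `e` with the permanent `a`
    have hab : R.conf a b := h.conf_hered_sc a e b (h.conf_symm e a hea) (hcr e b heb)
    exact hb.2 (Or.inr ⟨hb.1, a, ha, (hI.conf_iff b a).mpr ⟨h.conf_symm a b hab, hb.1, hac⟩⟩)
  · have heC' : e ∉ C := fun heC' => heC (Set.mem_diff_union_of_mem hBc heC' hec)
    obtain ⟨⟨c, hcC, hec', hc⟩, hlt, hrc⟩ := hI.removed_of_not_mem e he hec heC'
    exact ⟨⟨c, Set.mem_diff_union_of_mem hBc hcC hc, hec', fun hc' => hc hc'.1⟩,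
      fun b hb => hlt b hb.1, fun u hu => hrc u hu.1.1⟩

lemma residStep_F_removed (hcr : R.CauseRespecting) (hI : R.IsResidualAt C R')
    (hE' : R'.Enabled R'.C0 A B) (u : E) (hu : u ∈ R.F) (hnu : u ∉ R'.residF A) :
    (u ∉ (C \ B) ∪ A ∧ u ∉ R'.residCarrier A) ∨
      (∃ x ∈ (C \ B) ∪ A, R.prev x u ∧ x ∉ R'.residCarrier A) ∨
        (∃ a, R.rc a u ∧ a ∉ (C \ B) ∪ A ∧ a ∉ R'.residCarrier A) := by
  have hA : A ⊆ R'.carrier := hE'.2.2.1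
  have hBc : B ⊆ R'.carrier := fun u hu => (hI.F_subset (hE'.2.2.2.1 hu)).2
  by_cases huF : u ∈ R'.F
  · by_cases huc : u ∈ R'.residCarrier A
    · have hrem : u ∈ {e | e ∈ R'.F ∧ ∃ a ∈ R'.discardedEvents A, R'.rc a e} ∪
          {e | e ∈ R'.F ∧ ∃ a ∈ R'.permanentEvents A, R'.prev a e} := by
        by_contra hrem
        exact hnu ⟨⟨huF, huc⟩, hrem⟩
      rcases hrem with ⟨-, a, ha, hau⟩ | ⟨-, x, hx, hxu⟩
      · exact Or.inr (Or.inr ⟨a, ((hI.rc_iff a u).mp hau).1,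
          hI.notMem_of_mem_discardedEvents hE' ha, fun hac => hac.2 (Or.inr ha)⟩)
      · exact Or.inr (Or.inl ⟨x, hI.permanentEvents_subset hE' hx, ((hI.prev_iff x u).mp hxu).1,
          fun hxc => hxc.2 (Or.inl hx)⟩)
    · rcases mem_permanentEvents_or_discardedEvents (hI.F_subset huF).2 huc with
        (⟨-, hnF⟩ | ⟨-, x, hx, hux⟩) | hd
      · exact absurd huF hnF
      · exact Or.inr (Or.inl ⟨x, Or.inr hx.1, (hcr u x ((hI.lt_iff u x).mp hux).1).2 hu,
          fun hxc => hxc.2 (Or.inl (Or.inl hx))⟩)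
      · exact Or.inl ⟨hI.notMem_of_mem_discardedEvents hE' hd, huc⟩
  · rcases hI.F_removed u hu huF with ⟨huC, huc⟩ | ⟨x, hxC, hxu, hxc⟩ | ⟨a, hau, haC, hac⟩
    · exact Or.inl ⟨Set.notMem_diff_union_of_notMem hA huC huc, fun huc' => huc huc'.1⟩
    · exact Or.inr (Or.inl ⟨x, Set.mem_diff_union_of_mem hBc hxC hxc, hxu,
        fun hxc' => hxc hxc'.1⟩)
    · exact Or.inr (Or.inr ⟨a, hau, Set.notMem_diff_union_of_notMem hA haC hac,
        fun hac' => hac hac'.1⟩)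

lemma residStep (h : R.IsRPES) (hcr : R.CauseRespecting) (hI : R.IsResidualAt C R')
    (hE : R.Enabled C A B) : R.IsResidualAt ((C \ B) ∪ A) (R'.residStep A B) := by
  have hE' := hI.enabled_residual hE
  obtain ⟨-, -, hAcar, -, -, -, hcf, -⟩ := hE
  refine
    { toIsRestriction := hI.toIsRestriction.trans (isRestriction_residStep R' A B)
      C0_eq := ?_
      subset_carrier := Set.union_subset (Set.sdiff_subset.trans hI.subset_carrier) hAcar
      conflictFree := hcf.mono (Set.union_subset_union_left A Set.sdiff_subset)
      removed_of_mem := hI.residStep_removed_of_mem h hE'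
      removed_of_not_mem := hI.residStep_removed_of_not_mem h hcr hE'
      F_removed := hI.residStep_F_removed hcr hE' }
  ext x
  have hx : x ∈ R'.residCarrier A → x ∈ R'.carrier := And.left
  simp only [residStep_C0, residStep_carrier, Set.mem_inter_iff, Set.mem_union, Set.mem_sdiff,
    hI.mem_C0]
  tauto

end IsResidualAt

lemma resid_append_singleton (R : RPESData E L) (t : List (Set E × Set E))
    (p : Set E × Set E) : R.resid (t ++ [p]) = (R.resid t).residStep p.1 p.2 := by
  simp [resid, List.foldl_append]

lemma IsTraceFrom.append_singleton {C' : Set E} {t : List (Set E × Set E)} {p : Set E × Set E}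
    (ht : R.IsTraceFrom C t C') (hp : R.Enabled C' p.1 p.2) :
    R.IsTraceFrom C (t ++ [p]) ((C' \ p.2) ∪ p.1) := by
  induction t generalizing C with
  | nil =>
    obtain rfl : C' = C := ht
    exact ⟨hp, rfl⟩
  | cons q t ih => exact ⟨ht.1, ih ht.2⟩

lemma reachRes_resid_of_isTraceFrom (h : R.IsRPES) (hcr : R.CauseRespecting)
    {t : List (Set E × Set E)} {C' : Set E} (hI : R.IsResidualAt C R') (hR' : R.ReachRes R')
    (ht : R.IsTraceFrom C t C') : R.ReachRes (R'.resid t) ∧ R.IsResidualAt C' (R'.resid t) := by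
  induction t generalizing C R' with
  | nil =>
    obtain rfl : C' = C := ht
    exact ⟨hR', hI⟩
  | cons p t ih =>
    obtain ⟨hp, ht⟩ := ht
    exact ih (hI.residStep h hcr hp)
      (.step R' _ _ hR' ⟨p.1, p.2, (hI.enabled_iff h).mp hp, rfl, rfl⟩) ht

lemma exists_isTraceTo_of_reachRes (h : R.IsRPES) (hcr : R.CauseRespecting)
    (hR' : R.ReachRes R') : ∃ t C, R.IsTraceTo t C ∧ R' = R.resid t ∧ R.IsResidualAt C R' := by
  induction hR' with
  | init => exact ⟨[], R.C0, rfl, rfl, h.isResidualAt_C0⟩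
  | step R₁ M R₂ _ hstep ih =>
    obtain ⟨t, C, ht, rfl, hI⟩ := ih
    obtain ⟨A, B, hE', rfl, -⟩ := hstep
    have hE : R.Enabled C A B := (hI.enabled_iff h).mpr hE'
    exact ⟨t ++ [(A, B)], (C \ B) ∪ A, ht.append_singleton hE,
      (R.resid_append_singleton t (A, B)).symm, hI.residStep h hcr hE⟩

end RPESData

/-- (i) for every trace `t` of a cause-respecting RPES `R`, the
residual `R \ t` belongs to `Reach(R)`; (ii) for every `R' ∈ Reach(R)` there is
a trace `t` with `R' = R \ t`. -/
theorem resid_reach_correspondence {E L : Type} (R : RPESData E L)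
    (h : R.IsRPES) (hcr : R.CauseRespecting) :
    (∀ t, R.IsTrace t → R.ReachRes (R.resid t)) ∧
    (∀ R', R.ReachRes R' → ∃ t, R.IsTrace t ∧ R' = R.resid t) := by
  refine ⟨fun t ⟨C, ht⟩ => ?_, fun R' hR' => ?_⟩
  · exact (RPESData.reachRes_resid_of_isTraceFrom h hcr h.isResidualAt_C0 .init ht).1
  · obtain ⟨t, C, ht, rfl, -⟩ := RPESData.exists_isTraceTo_of_reachRes h hcr hR'
    exact ⟨t, ⟨C, ht⟩, rfl⟩
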